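/- arXiv:2510.04979 — 3 statements merged into one kernel-verified Lean document; each statement's English description precedes it below -/
import Mathlib

section
/- For n⁺, n⁻ > 0, t ∈ (0,1], F ≥ 0, and 0 ≤ α with t·n⁺ + F·n⁻ - α·n⁻ > 0, it holds that t·n⁺/(t·n⁺ + (F-α)·n⁻) - t·n⁺/(t·n⁺ + F·n⁻) ≤ α/(t·(n⁺/n⁻) - α·(n⁻/n⁻)) when n⁺/n⁻ < 1, i.e., the precision error is at most α/(t·r - α) where r = n⁺/n⁻, provided t·r > α. -/
/-! Writing `A = t n⁺`, `f = F n⁻` and `a = α n⁻`, the precision gap is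
`A / (A + f - a) - A / (A + f) = A / (A + f) · a / (A + f - a)`. The first factor is at most `1`,
and since `f ≥ 0` the second is at most `a / (A - a)`, which is `α / (t r - α)` after dividing
through by `n⁻`. -/

theorem div_sub_sub_div_eq_div_mul_div {K : Type*} [Field K] {A f a : K}
    (h₁ : A + f - a ≠ 0) (h₂ : A + f ≠ 0) :
    A / (A + f - a) - A / (A + f) = A / (A + f) * (a / (A + f - a)) := by
  field_simp
  ring

theorem div_sub_sub_div_le_div_sub {K : Type*} [Field K] [LinearOrder K] [IsStrictOrderedRing K]
    {A f a : K} (ha : 0 ≤ a) (haA : a < A) (hf : 0 ≤ f) :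
    A / (A + f - a) - A / (A + f) ≤ a / (A - a) := by
  have hAa : 0 < A - a := sub_pos.mpr haA
  have hAfa : 0 < A + f - a := by linarith
  have hAf : 0 < A + f := by linarith
  rw [div_sub_sub_div_eq_div_mul_div hAfa.ne' hAf.ne']
  calc A / (A + f) * (a / (A + f - a)) ≤ 1 * (a / (A - a)) := by
        gcongr
        · exact (div_le_one hAf).mpr (by linarith)
        · linarith
    _ = a / (A - a) := one_mul _

theorem stmt_7_general (np nn t F α : ℝ) (hnn : 0 < nn)
    (hF : 0 ≤ F) (hα : 0 ≤ α)
    (htr : α < t * (np / nn)) :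
    t * np / (t * np + (F - α) * nn) - t * np / (t * np + F * nn)
      ≤ α / (t * (np / nn) - α) := by
  have hαt : α * nn < t * np := by
    rwa [← mul_div_assoc, lt_div_iff₀ hnn] at htr
  have hrhs : α / (t * (np / nn) - α) = α * nn / (t * np - α * nn) := by
    field_simp
  rw [hrhs, sub_mul, ← add_sub_assoc]
  exact div_sub_sub_div_le_div_sub (by positivity) hαt (by positivity)

/-- Precision error bound under class imbalance (`r = n⁺/n⁻ < 1`):
`t·n⁺/(t·n⁺+(F-α)·n⁻) - t·n⁺/(t·n⁺+F·n⁻) ≤ α/(t·r - α)`, provided `t·r > α`. -/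
theorem stmt_7 (np nn t F α : ℝ) (hnp : 0 < np) (hnn : 0 < nn)
    (ht0 : 0 < t) (ht1 : t ≤ 1) (hF : 0 ≤ F) (hα : 0 ≤ α)
    (hden : 0 < t * np + F * nn - α * nn)
    (hr : np / nn < 1) (htr : α < t * (np / nn)) :
    t * np / (t * np + (F - α) * nn) - t * np / (t * np + F * nn)
      ≤ α / (t * (np / nn) - α) :=
  stmt_7_general np nn t F α hnn hF hα htr
end

section
/- For n⁺, n⁻ > 0 with r = n⁺/n⁻ ≥ 1, t ∈ (0,1], F ≥ 0, and 0 ≤ α < t, the precision error satisfies t·n⁺/(t·n⁺ + (F-α)·n⁻) - t·n⁺/(t·n⁺ + F·n⁻) ≤ α/(t - α), provided t·n⁺ + (F-α)·n⁻ > 0. -/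
/-- Precision error bound when the class ratio `r = n⁺/n⁻ ≥ 1`:
`t·n⁺/(t·n⁺+(F-α)·n⁻) - t·n⁺/(t·n⁺+F·n⁻) ≤ α/(t - α)`. -/
theorem stmt_8 (np nn t F α : ℝ) (hnp : 0 < np) (hnn : 0 < nn)
    (hr : 1 ≤ np / nn) (ht0 : 0 < t) (ht1 : t ≤ 1) (hF : 0 ≤ F)
    (hα0 : 0 ≤ α) (hαt : α < t)
    (hden : 0 < t * np + (F - α) * nn) :
    t * np / (t * np + (F - α) * nn) - t * np / (t * np + F * nn)
      ≤ α / (t - α) := by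
  have hnnp : nn ≤ np := (one_le_div hnn).mp hr
  have hD2 : 0 < t * np + F * nn := by nlinarith
  have htα : 0 < t - α := by linarith
  rw [div_sub_div _ _ (ne_of_gt hden) (ne_of_gt hD2), div_le_div_iff₀ (by positivity) htα]
  have hD1 : (t - α) * np ≤ t * np + (F - α) * nn := by nlinarith
  have h2 : t * np ≤ t * np + F * nn := by nlinarith
  have h3 : (t - α) * np * (t * np) ≤ (t * np + (F - α) * nn) * (t * np + F * nn) :=
    mul_le_mul hD1 h2 (mul_pos ht0 hnp).le hden.le
  nlinarith [mul_le_mul_of_nonneg_left h3 hα0,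
    mul_le_mul_of_nonneg_left hnnp (mul_nonneg (mul_nonneg hα0 htα.le) (mul_pos ht0 hnp).le)]
end

section
/- Let f : [0,1] → ℝ satisfy 0 ≤ f(t) ≤ min(1, α/(t·r - α)) for all t where the second bound applies when t·r > α, with constants α > 0, r ∈ (0,1], and 2α/r ≤ 1. Then ∫₀¹ f(t) dt ≤ (α/r)·(2 + log(r/α)). -/
/-!
Split `[0, 1]` at `c = 2α/r`. On `[0, c]` the bound `f ≤ 1` contributes `c = 2α/r`. On `[c, 1]`
we have `t r - α ≥ α > 0`, and `α/(t r - α)` integrates in closed form to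
`(α/r) log((r - α)/α) ≤ (α/r) log(r/α)`. A non-integrable `f` has integral `0` by convention,
which is below the right-hand side since `r/α ≥ 2`.
-/

open MeasureTheory intervalIntegral

lemma intervalIntegrable_div_mul_sub {α r a b : ℝ} (hr : 0 < r) (ha : α < a * r) (hab : a ≤ b) :
    IntervalIntegrable (fun t => α / (t * r - α)) volume a b := by
  refine (ContinuousOn.div continuousOn_const (by fun_prop) fun t ht => ?_).intervalIntegrable
  rw [Set.uIcc_of_le hab] at ht
  nlinarith [ht.1]

lemma integral_div_mul_sub {α r a b : ℝ} (hr : 0 < r) (ha : α < a * r) (hab : a ≤ b) :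
    ∫ t in a..b, α / (t * r - α) = α / r * Real.log ((b * r - α) / (a * r - α)) := by
  have hb : α < b * r := ha.trans_le (by gcongr)
  have hsubst := integral_comp_mul_sub (a := a) (b := b) (fun x => x⁻¹) hr.ne' α
  simp_rw [div_eq_mul_inv α, mul_comm _ r]
  rw [intervalIntegral.integral_const_mul, hsubst,
    integral_inv_of_pos (by linarith) (by linarith), smul_eq_mul, mul_assoc]

lemma integral_le_of_le_const_of_le_on {f g : ℝ → ℝ} {a b c M : ℝ} (hac : a ≤ c) (hcb : c ≤ b)
    (hf : IntervalIntegrable f volume a b) (hg : IntervalIntegrable g volume c b)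
    (hfM : ∀ t ∈ Set.Icc a c, f t ≤ M) (hfg : ∀ t ∈ Set.Icc c b, f t ≤ g t) :
    ∫ t in a..b, f t ≤ (c - a) * M + ∫ t in c..b, g t := by
  have hc : c ∈ Set.uIcc a b := Set.mem_uIcc.2 (.inl ⟨hac, hcb⟩)
  have hf₁ := hf.mono_set (Set.uIcc_subset_uIcc_left hc)
  have hf₂ := hf.mono_set (Set.uIcc_subset_uIcc_right hc)
  rw [← integral_add_adjacent_intervals hf₁ hf₂]
  gcongr
  · simpa using integral_mono_on hac hf₁ intervalIntegrable_const hfM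
  · exact integral_mono_on hcb hf₂ hg hfg

theorem stmt_19_general (α r : ℝ) (hα : 0 < α) (hr0 : 0 < r)
    (hle : 2 * α / r ≤ 1)
    (f : ℝ → ℝ)
    (hf1 : ∀ t ∈ Set.Icc (0:ℝ) 1, f t ≤ 1)
    (hfb : ∀ t ∈ Set.Icc (0:ℝ) 1, α < t * r → f t ≤ α / (t * r - α)) :
    ∫ t in (0:ℝ)..1, f t ≤ (α / r) * (2 + Real.log (r / α)) := by
  have hαr : 2 * α ≤ r := by rwa [div_le_one hr0] at hle
  have hlog : Real.log ((r - α) / α) ≤ Real.log (r / α) :=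
    Real.log_le_log (div_pos (by linarith) hα) (by gcongr; linarith)
  by_cases hf : IntervalIntegrable f volume 0 1
  swap
  · rw [integral_undef hf]
    have : 0 ≤ Real.log (r / α) := Real.log_nonneg (by rw [le_div_iff₀ hα]; linarith)
    positivity
  set c := 2 * α / r
  have hcr : c * r = 2 * α := div_mul_cancel₀ _ hr0.ne'
  have hc : α < c * r := by linarith
  calc ∫ t in (0:ℝ)..1, f t
      ≤ (c - 0) * 1 + ∫ t in c..1, α / (t * r - α) :=
        integral_le_of_le_const_of_le_on (by positivity) hle hf
          (intervalIntegrable_div_mul_sub hr0 hc hle)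
          (fun t ht => hf1 t ⟨ht.1, ht.2.trans hle⟩)
          (fun t ht => hfb t ⟨(by positivity : 0 ≤ c).trans ht.1, ht.2⟩
            (hc.trans_le (by gcongr; exact ht.1)))
    _ = α / r * (2 + Real.log ((r - α) / α)) := by
        rw [integral_div_mul_sub hr0 hc hle, hcr, one_mul, two_mul, add_sub_cancel_right]
        ring
    _ ≤ α / r * (2 + Real.log (r / α)) := by gcongr

/-- If `0 ≤ f t ≤ 1` on `[0,1]` and `f t ≤ α/(t·r - α)` whenever `t·r > α`,
with `α > 0`, `r ∈ (0,1]`, `2α/r ≤ 1`, then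
`∫₀¹ f ≤ (α/r)·(2 + log(r/α))`. -/
theorem stmt_19 (α r : ℝ) (hα : 0 < α) (hr0 : 0 < r) (hr1 : r ≤ 1)
    (hle : 2 * α / r ≤ 1)
    (f : ℝ → ℝ)
    (hf0 : ∀ t ∈ Set.Icc (0:ℝ) 1, 0 ≤ f t)
    (hf1 : ∀ t ∈ Set.Icc (0:ℝ) 1, f t ≤ 1)
    (hfb : ∀ t ∈ Set.Icc (0:ℝ) 1, α < t * r → f t ≤ α / (t * r - α)) :
    ∫ t in (0:ℝ)..1, f t ≤ (α / r) * (2 + Real.log (r / α)) :=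
  stmt_19_general α r hα hr0 hle f hf1 hfb
end
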